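/- arXiv:1609.00451 — 3 statements merged into one kernel-verified Lean document; each statement's English description precedes it below -/
import Mathlib

section
/- Let $\mathbf{H}$ and $\mathbf{H}'$ be set-valued classifiers such that $\mathbb{P}\{Y \in \mathbf{H}(X) \mid Y=y\} = \mathbb{P}\{Y \in \mathbf{H}'(X) \mid Y=y\} = 1-\alpha_y$ for all $y \in \{1,\ldots,K\}$. If $\mathbb{P}\{y \in \mathbf{H}(X) \mid Y \neq y\} \leq \mathbb{P}\{y \in \mathbf{H}'(X) \mid Y \neq y\}$ for all $y$, then $\mathbb{E}|\mathbf{H}(X)| \leq \mathbb{E}|\mathbf{H}'(X)|$. -/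
open MeasureTheory

/-!
Write the expected size as a sum over labels, `𝔼|H(X)| = ∑ y, ℙ(y ∈ H(X))`, and split each
summand according to whether `y` is the true label:
`ℙ(y ∈ H(X)) = ℙ(Y ∈ H(X), Y = y) + ℙ(y ∈ H(X), Y ≠ y)`.
Equal class-specific coverage makes the first terms agree for `H` and `H'`, and the hypothesis
on incorrect label assignment orders the second terms. Each numerator is at most its
denominator, so these ratio conditions pin down the numerators even when a denominator
vanishes (where `x / 0 = 0`).
-/

theorem Finset.card_eq_sum_indicator_one {ι α : Type*} [Fintype ι] (G : α → Finset ι) (a : α) :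
    ((G a).card : ℝ) = ∑ i, {a | i ∈ G a}.indicator 1 a := by
  classical
  simp [Set.indicator_apply]

theorem MeasureTheory.integral_card_eq_sum_measureReal {Ω ι : Type*} [MeasurableSpace Ω]
    [Fintype ι] (μ : Measure Ω) [IsFiniteMeasure μ] (G : Ω → Finset ι)
    (hG : ∀ i, MeasurableSet {ω | i ∈ G ω}) :
    ∫ ω, ((G ω).card : ℝ) ∂μ = ∑ i, μ.real {ω | i ∈ G ω} := by
  simp_rw [Finset.card_eq_sum_indicator_one G]
  rw [integral_finsetSum _ fun i _ => (integrable_const 1).indicator (hG i)]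
  simp only [integral_indicator_one (hG _)]

theorem le_of_div_le_div_right_of_le {𝕜 : Type*} [Field 𝕜] [LinearOrder 𝕜]
    [IsStrictOrderedRing 𝕜] {a b c : 𝕜} (ha : 0 ≤ a) (hac : a ≤ c) (hb : 0 ≤ b)
    (h : a / c ≤ b / c) : a ≤ b := by
  rcases (ha.trans hac).eq_or_lt with hc | hc
  · linarith
  · exact (div_le_div_iff_of_pos_right hc).mp h

theorem eq_of_div_eq_div_right_of_le {𝕜 : Type*} [Field 𝕜] [LinearOrder 𝕜]
    [IsStrictOrderedRing 𝕜] {a b c : 𝕜} (ha : 0 ≤ a) (hac : a ≤ c) (hb : 0 ≤ b)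
    (hbc : b ≤ c) (h : a / c = b / c) : a = b :=
  le_antisymm (le_of_div_le_div_right_of_le ha hac hb h.le)
    (le_of_div_le_div_right_of_le hb hbc ha h.ge)

theorem MeasureTheory.measureReal_mem_eq_add {Ω ι : Type*} [MeasurableSpace Ω]
    [MeasurableSpace ι] [MeasurableSingletonClass ι] (μ : Measure Ω) [IsFiniteMeasure μ]
    (Z : Ω → Finset ι) (Y : Ω → ι) (hY : Measurable Y) (y : ι) :
    μ.real {ω | y ∈ Z ω} = μ.real {ω | Y ω ∈ Z ω ∧ Y ω = y} + μ.real {ω | y ∈ Z ω ∧ Y ω ≠ y} := by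
  have htrue : {ω | Y ω ∈ Z ω ∧ Y ω = y} = {ω | y ∈ Z ω} ∩ {ω | Y ω = y} := by
    ext ω
    constructor <;> rintro ⟨h, rfl⟩ <;> exact ⟨h, rfl⟩
  rw [htrue]
  exact (measureReal_inter_add_sdiff (hY (measurableSet_singleton y))).symm

theorem stmt3_general {Ω 𝓧 : Type*} [MeasureSpace Ω] [IsProbabilityMeasure (volume : Measure Ω)]
    [MeasurableSpace 𝓧] {K : ℕ}
    (X : Ω → 𝓧) (Y : Ω → Fin K) (hX : Measurable X) (hY : Measurable Y)
    (H H' : 𝓧 → Finset (Fin K))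
    (hHmeas : ∀ y : Fin K, MeasurableSet {x | y ∈ H x})
    (hH'meas : ∀ y : Fin K, MeasurableSet {x | y ∈ H' x})
    (α : Fin K → ℝ)
    -- both classifiers have class-specific coverage exactly 1 - α_y
    (hcovH : ∀ y : Fin K,
      (volume {ω | Y ω ∈ H (X ω) ∧ Y ω = y}).toReal / (volume {ω | Y ω = y}).toReal
        = 1 - α y)
    (hcovH' : ∀ y : Fin K,
      (volume {ω | Y ω ∈ H' (X ω) ∧ Y ω = y}).toReal / (volume {ω | Y ω = y}).toReal
        = 1 - α y)
    -- H has smaller probabilities of incorrect label assignment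
    (hincorrect : ∀ y : Fin K,
      (volume {ω | y ∈ H (X ω) ∧ Y ω ≠ y}).toReal / (volume {ω | Y ω ≠ y}).toReal
        ≤ (volume {ω | y ∈ H' (X ω) ∧ Y ω ≠ y}).toReal / (volume {ω | Y ω ≠ y}).toReal) :
    ∫ ω, ((H (X ω)).card : ℝ) ≤ ∫ ω, ((H' (X ω)).card : ℝ) := by
  rw [integral_card_eq_sum_measureReal _ _ fun y => hX (hHmeas y),
    integral_card_eq_sum_measureReal _ _ fun y => hX (hH'meas y)]
  refine Finset.sum_le_sum fun y _ => ?_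
  have hcov : volume.real {ω | Y ω ∈ H (X ω) ∧ Y ω = y}
      = volume.real {ω | Y ω ∈ H' (X ω) ∧ Y ω = y} :=
    eq_of_div_eq_div_right_of_le measureReal_nonneg (measureReal_mono fun _ h => h.2)
      measureReal_nonneg (measureReal_mono fun _ h => h.2) ((hcovH y).trans (hcovH' y).symm)
  have hinc : volume.real {ω | y ∈ H (X ω) ∧ Y ω ≠ y}
      ≤ volume.real {ω | y ∈ H' (X ω) ∧ Y ω ≠ y} :=
    le_of_div_le_div_right_of_le measureReal_nonneg (measureReal_mono fun _ h => h.2)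
      measureReal_nonneg (hincorrect y)
  rw [measureReal_mem_eq_add _ _ Y hY, measureReal_mem_eq_add _ _ Y hY]
  linarith

/-- If `H` and `H'` have the same class-specific coverages `1 - α_y` and `H` has
pointwise smaller probabilities of incorrect label assignment, then `H` has smaller
ambiguity. -/
theorem stmt3 {Ω 𝓧 : Type*} [MeasureSpace Ω] [IsProbabilityMeasure (volume : Measure Ω)]
    [MeasurableSpace 𝓧] {K : ℕ}
    (X : Ω → 𝓧) (Y : Ω → Fin K) (hX : Measurable X) (hY : Measurable Y)
    (H H' : 𝓧 → Finset (Fin K))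
    (hHmeas : ∀ y : Fin K, MeasurableSet {x | y ∈ H x})
    (hH'meas : ∀ y : Fin K, MeasurableSet {x | y ∈ H' x})
    (α : Fin K → ℝ) (hα : ∀ y, α y ∈ Set.Icc (0:ℝ) 1)
    (hpos : ∀ y : Fin K, volume {ω | Y ω = y} ≠ 0)
    (hposc : ∀ y : Fin K, volume {ω | Y ω ≠ y} ≠ 0)
    -- both classifiers have class-specific coverage exactly 1 - α_y
    (hcovH : ∀ y : Fin K,
      (volume {ω | Y ω ∈ H (X ω) ∧ Y ω = y}).toReal / (volume {ω | Y ω = y}).toReal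
        = 1 - α y)
    (hcovH' : ∀ y : Fin K,
      (volume {ω | Y ω ∈ H' (X ω) ∧ Y ω = y}).toReal / (volume {ω | Y ω = y}).toReal
        = 1 - α y)
    -- H has smaller probabilities of incorrect label assignment
    (hincorrect : ∀ y : Fin K,
      (volume {ω | y ∈ H (X ω) ∧ Y ω ≠ y}).toReal / (volume {ω | Y ω ≠ y}).toReal
        ≤ (volume {ω | y ∈ H' (X ω) ∧ Y ω ≠ y}).toReal / (volume {ω | Y ω ≠ y}).toReal) :
    ∫ ω, ((H (X ω)).card : ℝ) ≤ ∫ ω, ((H' (X ω)).card : ℝ) :=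
  stmt3_general X Y hX hY H H' hHmeas hH'meas α hcovH hcovH' hincorrect
end

section
/- Let $\tilde{\mathbb{A}}$ be the minimal ambiguity over all set-valued classifiers $\mathbf{H}$ satisfying both the class-specific coverage constraints $\mathbb{P}\{Y \in \mathbf{H}(X)|Y=y\} \geq 1-\alpha_y$ for all $y$ and the no-null-region constraint $\mathbf{H}(x) \neq \emptyset$ for all $x$. Let $\mathbf{H}^*$ be a minimizer of ambiguity subject only to the coverage constraints, with null region $\mathcal{N}(\mathbf{H}^*) = \{x : \mathbf{H}^*(x) = \emptyset\}$. Let $\mathbf{H}^\dagger$ agree with $\mathbf{H}^*$ outside $\mathcal{N}(\mathbf{H}^*)$ and satisfy $|\mathbf{H}^\dagger(x)| = 1$ on $\mathcal{N}(\mathbf{H}^*)$. Then $\tilde{\mathbb{A}} \leq \mathbb{A}(\mathbf{H}^\dagger) \leq \tilde{\mathbb{A}} + \mathbb{P}\{X \in \mathcal{N}(\mathbf{H}^*)\}$. -/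
open MeasureTheory

/-!
Wherever `H*` is nonempty, `H†` contains `H*`, so `H†` inherits the coverage of `H*`; having no
null region, it is admissible for `Ã`, which gives the lower bound. Pointwise
`|H†| = |H*| + 𝟙_𝒩`, so `𝔸(H†) = 𝔸(H*) + ℙ(X ∈ 𝒩)`, and `𝔸(H*) ≤ Ã` because `H*` minimizes
over the larger class of merely covering classifiers.
-/

section

variable {Ω 𝓧 ι : Type*}

section Measurability

variable [MeasurableSpace Ω] {H : Ω → Finset ι}

lemma measurableSet_setOf_eq_empty [Countable ι] (hH : ∀ i, MeasurableSet {ω | i ∈ H ω}) :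
    MeasurableSet {ω | H ω = ∅} := by
  have h : {ω | H ω = ∅} = ⋂ i, {ω | i ∈ H ω}ᶜ := by
    ext ω
    simp [Finset.eq_empty_iff_forall_notMem]
  rw [h]
  exact MeasurableSet.iInter fun i => (hH i).compl

lemma measurable_card [Fintype ι] (hH : ∀ i, MeasurableSet {ω | i ∈ H ω}) :
    Measurable fun ω => ((H ω).card : ℝ) := by
  have h : (fun ω => ((H ω).card : ℝ)) = fun ω => ∑ i, {ω | i ∈ H ω}.indicator 1 ω := by
    classical
    funext ω
    simp only [Set.indicator_apply, Set.mem_ofPred_eq, Pi.one_apply]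
    rw [Finset.sum_boole, Finset.filter_univ_mem]
  rw [h]
  exact Finset.measurable_sum _ fun i _ => measurable_const.indicator (hH i)

lemma integrable_card [Fintype ι] {μ : Measure Ω} [IsFiniteMeasure μ]
    (hH : ∀ i, MeasurableSet {ω | i ∈ H ω}) :
    Integrable (fun ω => ((H ω).card : ℝ)) μ := by
  refine Integrable.mono' (integrable_const (Fintype.card ι : ℝ))
    (measurable_card hH).aestronglyMeasurable (ae_of_all _ fun ω => ?_)
  rw [Real.norm_natCast]
  exact_mod_cast Finset.card_le_univ (H ω)

end Measurability

section NullRegionFill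

variable {H G : 𝓧 → Finset ι}

lemma subset_of_agree (hagree : ∀ x, H x ≠ ∅ → G x = H x) (x : 𝓧) : H x ⊆ G x := by
  by_cases hx : H x = ∅
  · simp [hx]
  · rw [hagree x hx]

lemma ne_empty_of_fill (hagree : ∀ x, H x ≠ ∅ → G x = H x)
    (hfill : ∀ x, H x = ∅ → (G x).card = 1) (x : 𝓧) : G x ≠ ∅ := by
  by_cases hx : H x = ∅
  · intro hG
    simpa [hG] using hfill x hx
  · rwa [hagree x hx]

lemma card_fill_eq (hagree : ∀ x, H x ≠ ∅ → G x = H x)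
    (hfill : ∀ x, H x = ∅ → (G x).card = 1) (x : 𝓧) :
    ((G x).card : ℝ) = (H x).card + {x | H x = ∅}.indicator (fun _ => 1) x := by
  by_cases hx : H x = ∅
  · simp [hfill x hx, hx]
  · simp [hagree x hx, hx]

lemma integral_card_fill [MeasurableSpace Ω] [Fintype ι] {μ : Measure Ω} [IsFiniteMeasure μ]
    {H G : Ω → Finset ι} (hH : ∀ i, MeasurableSet {ω | i ∈ H ω})
    (hagree : ∀ ω, H ω ≠ ∅ → G ω = H ω) (hfill : ∀ ω, H ω = ∅ → (G ω).card = 1) :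
    ∫ ω, ((G ω).card : ℝ) ∂μ = ∫ ω, ((H ω).card : ℝ) ∂μ + μ.real {ω | H ω = ∅} := by
  have hN := measurableSet_setOf_eq_empty hH
  simp_rw [card_fill_eq hagree hfill]
  rw [integral_add (integrable_card hH) ((integrable_const 1).indicator hN),
    integral_indicator_const _ hN, smul_eq_mul, mul_one]

lemma coverage_mono [MeasurableSpace Ω] {μ : Measure Ω} [IsFiniteMeasure μ]
    (X : Ω → 𝓧) (Y : Ω → ι) (hHG : ∀ x, H x ⊆ G x) (y : ι) :
    (μ {ω | Y ω ∈ H (X ω) ∧ Y ω = y}).toReal / (μ {ω | Y ω = y}).toReal ≤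
      (μ {ω | Y ω ∈ G (X ω) ∧ Y ω = y}).toReal / (μ {ω | Y ω = y}).toReal := by
  gcongr
  · exact measure_ne_top _ _
  · exact hHG _

end NullRegionFill

end

theorem stmt6_general {Ω 𝓧 : Type*} [MeasureSpace Ω] [IsProbabilityMeasure (volume : Measure Ω)]
    [MeasurableSpace 𝓧] {K : ℕ}
    (X : Ω → 𝓧) (Y : Ω → Fin K) (hX : Measurable X)
    (α : Fin K → ℝ)
    -- the coverage constraint predicate
    (Cov : (𝓧 → Finset (Fin K)) → Prop)
    (hCov : ∀ H, Cov H ↔ (∀ y : Fin K, MeasurableSet {x | y ∈ H x}) ∧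
      ∀ y : Fin K, 1 - α y ≤
        (volume {ω | Y ω ∈ H (X ω) ∧ Y ω = y}).toReal / (volume {ω | Y ω = y}).toReal)
    -- the ambiguity functional
    (A : (𝓧 → Finset (Fin K)) → ℝ)
    (hA : ∀ H, A H = ∫ ω, ((H (X ω)).card : ℝ))
    -- Ã is the minimal ambiguity subject to coverage and no null region
    (Atil : ℝ)
    (hAtil_attained : ∃ H0, Cov H0 ∧ (∀ x, H0 x ≠ ∅) ∧ A H0 = Atil)
    (hAtil_min : ∀ H, Cov H → (∀ x, H x ≠ ∅) → Atil ≤ A H)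
    -- H* minimizes ambiguity subject only to coverage
    (Hstar : 𝓧 → Finset (Fin K))
    (hHstar_cov : Cov Hstar)
    (hHstar_min : ∀ H, Cov H → A Hstar ≤ A H)
    -- H† agrees with H* outside the null region and is single-valued on it
    (Hdag : 𝓧 → Finset (Fin K))
    (hdag_meas : ∀ y : Fin K, MeasurableSet {x | y ∈ Hdag x})
    (hdag_agree : ∀ x, Hstar x ≠ ∅ → Hdag x = Hstar x)
    (hdag_fill : ∀ x, Hstar x = ∅ → (Hdag x).card = 1) :
    Atil ≤ A Hdag ∧
      A Hdag ≤ Atil + (volume {ω | Hstar (X ω) = ∅}).toReal := by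
  obtain ⟨hstar_meas, hstar_cov⟩ := (hCov Hstar).mp hHstar_cov
  have hdag_cov : Cov Hdag := (hCov Hdag).mpr ⟨hdag_meas, fun y =>
    (hstar_cov y).trans (coverage_mono X Y (subset_of_agree hdag_agree) y)⟩
  refine ⟨hAtil_min Hdag hdag_cov (ne_empty_of_fill hdag_agree hdag_fill), ?_⟩
  obtain ⟨H0, hH0_cov, -, rfl⟩ := hAtil_attained
  have hstar_le := hHstar_min H0 hH0_cov
  have hsplit := integral_card_fill (μ := volume) (fun i => hX (hstar_meas i))
    (fun ω => hdag_agree (X ω)) (fun ω => hdag_fill (X ω))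
  rw [hA, hA] at hstar_le ⊢
  rw [hsplit, ← measureReal_def]
  linarith

/-- Excess risk bound for filling the null region with a single-valued classifier:
`Ã ≤ 𝔸(H†) ≤ Ã + ℙ(𝒩(H*))`. -/
theorem stmt6 {Ω 𝓧 : Type*} [MeasureSpace Ω] [IsProbabilityMeasure (volume : Measure Ω)]
    [MeasurableSpace 𝓧] {K : ℕ}
    (X : Ω → 𝓧) (Y : Ω → Fin K) (hX : Measurable X) (hY : Measurable Y)
    (hpos : ∀ y : Fin K, volume {ω | Y ω = y} ≠ 0)
    (α : Fin K → ℝ)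
    -- the coverage constraint predicate
    (Cov : (𝓧 → Finset (Fin K)) → Prop)
    (hCov : ∀ H, Cov H ↔ (∀ y : Fin K, MeasurableSet {x | y ∈ H x}) ∧
      ∀ y : Fin K, 1 - α y ≤
        (volume {ω | Y ω ∈ H (X ω) ∧ Y ω = y}).toReal / (volume {ω | Y ω = y}).toReal)
    -- the ambiguity functional
    (A : (𝓧 → Finset (Fin K)) → ℝ)
    (hA : ∀ H, A H = ∫ ω, ((H (X ω)).card : ℝ))
    -- Ã is the minimal ambiguity subject to coverage and no null region
    (Atil : ℝ)
    (hAtil_attained : ∃ H0, Cov H0 ∧ (∀ x, H0 x ≠ ∅) ∧ A H0 = Atil)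
    (hAtil_min : ∀ H, Cov H → (∀ x, H x ≠ ∅) → Atil ≤ A H)
    -- H* minimizes ambiguity subject only to coverage
    (Hstar : 𝓧 → Finset (Fin K))
    (hHstar_cov : Cov Hstar)
    (hHstar_min : ∀ H, Cov H → A Hstar ≤ A H)
    -- H† agrees with H* outside the null region and is single-valued on it
    (Hdag : 𝓧 → Finset (Fin K))
    (hdag_meas : ∀ y : Fin K, MeasurableSet {x | y ∈ Hdag x})
    (hdag_agree : ∀ x, Hstar x ≠ ∅ → Hdag x = Hstar x)
    (hdag_fill : ∀ x, Hstar x = ∅ → (Hdag x).card = 1) :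
    Atil ≤ A Hdag ∧
      A Hdag ≤ Atil + (volume {ω | Hstar (X ω) = ∅}).toReal :=
  stmt6_general X Y hX α Cov hCov A hA Atil hAtil_attained hAtil_min Hstar hHstar_cov hHstar_min
    Hdag hdag_meas hdag_agree hdag_fill
end

section
/- Consider binary classification on $\mathbb{R}$ with $\mathbb{P}(Y=1) = \pi \in (1/2, 1)$, $X|Y=1 \sim N(-1,1)$ and $X|Y=2 \sim N(1,1)$. For the total-coverage optimal classifier $\mathbf{H}_t(x) = \{y : p(y|x) \geq t\}$ with fixed threshold $t \in (0,1/2)$, the class-2-specific coverage $\mathbb{P}\{2 \in \mathbf{H}_t(X) \mid Y=2\}$ is strictly decreasing in $\pi$. -/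
open MeasureTheory ProbabilityTheory

/-- In the two-class Gaussian example, for a fixed threshold `t ∈ (0, 1/2)`, the
class-2 coverage of the total-coverage classifier is strictly decreasing in the
class-1 prior probability `π ∈ (1/2, 1)`. -/
theorem stmt17 (t : ℝ) (ht : t ∈ Set.Ioo (0:ℝ) (1/2))
    (φ : ℝ → ℝ)
    (hφ : ∀ x, φ x = (Real.sqrt (2 * Real.pi))⁻¹ * Real.exp (-(x ^ 2) / 2))
    (p2 : ℝ → ℝ → ℝ)
    (hp2 : ∀ pr x, p2 pr x =
      (1 - pr) * φ (x - 1) / (pr * φ (x + 1) + (1 - pr) * φ (x - 1))) :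
    StrictAntiOn
      (fun pr => ((gaussianReal 1 1) {x | t ≤ p2 pr x}).toReal)
      (Set.Ioo (1/2 : ℝ) 1) := by
  obtain ⟨ht0, ht2⟩ := ht
  have h1t : (0:ℝ) < 1 - t := by linarith
  have hC : (0:ℝ) < (Real.sqrt (2 * Real.pi))⁻¹ := by
    refine inv_pos.mpr (Real.sqrt_pos.mpr ?_)
    positivity
  have hφpos : ∀ x, 0 < φ x := by
    intro x
    rw [hφ]
    exact mul_pos hC (Real.exp_pos _)
  -- the cutoff
  set c : ℝ → ℝ := fun pr => Real.log (t * pr / ((1 - t) * (1 - pr))) / 2 with hc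
  -- the set is Ici (c pr)
  have hset : ∀ pr ∈ Set.Ioo (1/2:ℝ) 1, {x | t ≤ p2 pr x} = Set.Ici (c pr) := by
    intro pr hpr
    obtain ⟨hpr1, hpr2⟩ := hpr
    have hpr0 : (0:ℝ) < pr := by linarith
    have hpr3 : (0:ℝ) < 1 - pr := by linarith
    ext x
    simp only [Set.mem_setOf_eq, Set.mem_Ici]
    have hb : (0:ℝ) < pr * φ (x + 1) + (1 - pr) * φ (x - 1) := by
      have := hφpos (x + 1); have := hφpos (x - 1)
      positivity
    rw [hp2, le_div_iff₀ hb]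
    have h1 : t * (pr * φ (x + 1) + (1 - pr) * φ (x - 1)) ≤ (1 - pr) * φ (x - 1) ↔
        t * pr * φ (x + 1) ≤ (1 - t) * (1 - pr) * φ (x - 1) := by
      constructor <;> intro h <;> nlinarith [hφpos (x+1), hφpos (x-1)]
    rw [h1, hφ (x + 1), hφ (x - 1)]
    have hA : (0:ℝ) < t * pr := mul_pos ht0 hpr0
    have hB : (0:ℝ) < (1 - t) * (1 - pr) := mul_pos h1t hpr3
    have e1 : t * pr * ((Real.sqrt (2 * Real.pi))⁻¹ * Real.exp (-((x+1) ^ 2) / 2)) =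
        Real.exp (Real.log (t * pr * (Real.sqrt (2 * Real.pi))⁻¹) + -((x+1) ^ 2) / 2) := by
      rw [Real.exp_add, Real.exp_log (by positivity)]; ring
    have e2 : (1 - t) * (1 - pr) * ((Real.sqrt (2 * Real.pi))⁻¹ * Real.exp (-((x-1) ^ 2) / 2)) =
        Real.exp (Real.log ((1 - t) * (1 - pr) * (Real.sqrt (2 * Real.pi))⁻¹) + -((x-1) ^ 2) / 2) := by
      rw [Real.exp_add, Real.exp_log (by positivity)]; ring
    rw [e1, e2, Real.exp_le_exp,
      Real.log_mul hA.ne' hC.ne', Real.log_mul hB.ne' hC.ne']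
    rw [hc]
    simp only
    rw [Real.log_div hA.ne' hB.ne']
    have hsq : (x + 1) ^ 2 = (x - 1) ^ 2 + 4 * x := by ring
    constructor <;> intro h <;> nlinarith [hsq]
  -- cutoff strictly increasing
  intro p hp q hq hpq
  simp only
  rw [hset p hp, hset q hq]
  have hcc : c p < c q := by
    obtain ⟨hp1, hp2'⟩ := hp
    obtain ⟨hq1, hq2'⟩ := hq
    have hp0 : (0:ℝ) < p := by linarith
    have hq0 : (0:ℝ) < q := by linarith
    have hp3 : (0:ℝ) < 1 - p := by linarith
    have hq3 : (0:ℝ) < 1 - q := by linarith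
    have harg : t * p / ((1 - t) * (1 - p)) < t * q / ((1 - t) * (1 - q)) := by
      rw [div_lt_div_iff₀ (by positivity) (by positivity)]
      nlinarith [mul_pos (mul_pos ht0 h1t) (sub_pos.mpr hpq)]
    have hpos : (0:ℝ) < t * p / ((1 - t) * (1 - p)) := by positivity
    have := Real.log_lt_log hpos harg
    rw [hc]
    simp only
    linarith
  -- measure comparison
  set μ := gaussianReal 1 (1 : NNReal) with hμ
  have hsplit : μ (Set.Ici (c p)) = μ (Set.Ico (c p) (c q)) + μ (Set.Ici (c q)) := by
    rw [← measure_union _ measurableSet_Ici, Set.Ico_union_Ici_eq_Ici hcc.le]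
    exact (Set.Iio_disjoint_Ici le_rfl).mono_left Set.Ico_subset_Iio_self
  have hpos : μ (Set.Ico (c p) (c q)) ≠ 0 := by
    intro h0
    have hv : volume (Set.Ico (c p) (c q)) = 0 :=
      (gaussianReal_absolutelyContinuous' 1 one_ne_zero) h0
    rw [Real.volume_Ico] at hv
    have : c q - c p ≤ 0 := by
      by_contra hcon
      push_neg at hcon
      rw [ENNReal.ofReal_eq_zero] at hv
      linarith
    linarith
  have hlt : μ (Set.Ici (c q)) < μ (Set.Ici (c p)) := by
    rw [hsplit]
    calc μ (Set.Ici (c q)) < μ (Set.Ici (c q)) + μ (Set.Ico (c p) (c q)) :=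
          ENNReal.lt_add_right (measure_ne_top μ _) hpos
      _ = μ (Set.Ico (c p) (c q)) + μ (Set.Ici (c q)) := by rw [add_comm]
  exact ENNReal.toReal_lt_toReal (measure_ne_top μ _) (measure_ne_top μ _) |>.mpr hlt
end
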